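/- The CHSH family of bipartite correlations P(ab|xy) = (2 + (-1)^{a⊕b⊕xy}√2 W)/8 with 0 < W ≤ 1 achieves CHSH expression value ⟨A₀B₀⟩+⟨A₀B₁⟩+⟨A₁B₀⟩−⟨A₁B₁⟩ = 2√2 W; hence it violates the CHSH inequality (bound 2) iff W > 1/√2, and violates the local-hidden-state steering bound √2 (for Alice performing σₓ, σ_y qubit measurements) iff W > 1/2. -/
import Mathlib


/-- The CHSH family of bipartite correlations. -/
noncomputable def chP (W : ℝ) (a b x y : Fin 2) : ℝ :=
  (2 + (-1 : ℝ) ^ ((a + b + x * y : Fin 2) : ℕ) * Real.sqrt 2 * W) / 8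

/-- The correlator ⟨A_x B_y⟩ for the CHSH family. -/
noncomputable def chE (W : ℝ) (x y : Fin 2) : ℝ :=
  ∑ a : Fin 2, ∑ b : Fin 2, (-1 : ℝ) ^ ((a + b : Fin 2) : ℕ) * chP W a b x y

/-- The CHSH expression for the CHSH family. -/
noncomputable def chCHSH (W : ℝ) : ℝ :=
  chE W 0 0 + chE W 0 1 + chE W 1 0 - chE W 1 1

theorem stmt17 (W : ℝ) (h0 : 0 < W) (h1 : W ≤ 1) :
    chCHSH W = 2 * Real.sqrt 2 * W ∧
    (chCHSH W > 2 ↔ W > 1 / Real.sqrt 2) ∧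
    (chCHSH W > Real.sqrt 2 ↔ W > 1 / 2) := by
  have hs : Real.sqrt 2 > 0 := Real.sqrt_pos.mpr (by norm_num)
  have hval : chCHSH W = 2 * Real.sqrt 2 * W := by
    simp [chCHSH, chE, chP, Fin.sum_univ_two]
    ring
  refine ⟨hval, ?_, ?_⟩
  · rw [hval]
    constructor
    · intro h
      rw [gt_iff_lt, div_lt_iff₀ hs]
      nlinarith
    · intro h
      rw [gt_iff_lt, div_lt_iff₀ hs] at h
      nlinarith [Real.sq_sqrt (by norm_num : (2:ℝ) ≥ 0)]
  · rw [hval]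
    constructor
    · intro h
      nlinarith
    · intro h
      nlinarith
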